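/- (Madow's moment condition implies the Lindeberg condition.) Consider a sequence of finite populations {a_N(i)}_{i=1}^N with sample sizes N₁ = N₁(N), such that N₁ → ∞, there exists δ ∈ (0,1) with N₁/N < 1 − δ for all sufficiently large N, S²_N > 0 for all N, and for every integer r > 2 the ratio [N⁻¹ Σᵢ |a_N(i) − ā_N|^r] / [N⁻¹ Σᵢ (a_N(i) − ā_N)²]^{r/2} stays bounded as N → ∞. Then for every ε > 0, Σᵢ (a_N(i) − ā_N)² 1{|a_N(i) − ā_N| > ε N₁ √V_N} / Σᵢ (a_N(i) − ā_N)² → 0 as N → ∞, where V_N = (1/N₁ − 1/N) S²_N. -/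
import Mathlib


open Finset Filter

/-- Finite-population mean `ā_N`. -/
noncomputable def fpMean {N : ℕ} (a : Fin N → ℝ) : ℝ := (∑ i, a i) / (N : ℝ)

/-- Finite-population variance `S²_N`. -/
noncomputable def fpVar {N : ℕ} (a : Fin N → ℝ) : ℝ :=
  (∑ i, (a i - fpMean a) ^ 2) / ((N : ℝ) - 1)

/-- `V_N = (1/N₁ - 1/N) S²_N`. -/
noncomputable def srsVar {N : ℕ} (a : Fin N → ℝ) (N₁ : ℕ) : ℝ :=
  (1 / (N₁ : ℝ) - 1 / (N : ℝ)) * fpVar a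

set_option maxHeartbeats 1600000 in
lemma key_ineq {N : ℕ} (b : Fin N → ℝ) (N₁ : ℕ) (ε δ M : ℝ)
    (hN : 2 ≤ N) (hN₁ : 1 ≤ N₁) (hε : 0 < ε) (hδpos : 0 < δ)
    (hfrac : (N₁ : ℝ) / N < 1 - δ)
    (hT : 0 < ∑ i, (b i) ^ 2)
    (hM0 : 0 ≤ M)
    (hM : (∑ i, |b i| ^ 3) / N ≤ M * ((∑ i, (b i) ^ 2) / N) ^ ((3:ℝ) / 2)) :
    (∑ i, if ε * N₁ * Real.sqrt ((1 / (N₁:ℝ) - 1 / N) * ((∑ j, (b j) ^ 2) / ((N:ℝ) - 1))) < |b i|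
        then (b i) ^ 2 else 0) / (∑ i, (b i) ^ 2)
      ≤ (M / ε) / Real.sqrt (δ * N₁) := by
  set T := ∑ i, (b i) ^ 2 with hTdef
  clear_value T
  have hNR : (2:ℝ) ≤ N := by exact_mod_cast hN
  have hNpos : (0:ℝ) < N := by linarith
  have hyR : (1:ℝ) ≤ N₁ := by exact_mod_cast hN₁
  have hypos : (0:ℝ) < N₁ := by linarith
  have hyx : (N₁ : ℝ) < N := by
    have h1 : (N₁:ℝ)/N < 1 := by
      have : (0:ℝ) < (N₁:ℝ)/N := by positivity
      linarith
    exact (div_lt_one hNpos).mp h1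
  have hx1 : (0:ℝ) < (N:ℝ) - 1 := by linarith
  set V := (1 / (N₁:ℝ) - 1 / N) * (T / ((N:ℝ) - 1)) with hVdef
  have hVpos : 0 < V := by
    apply mul_pos
    · have := one_div_lt_one_div_of_lt hypos hyx
      linarith
    · positivity
  have hsV : 0 < Real.sqrt V := Real.sqrt_pos.mpr hVpos
  clear_value V
  set c := ε * (N₁:ℝ) * Real.sqrt V with hcdef
  have hc : 0 < c := by positivity
  clear_value c
  have hP : (0:ℝ) < T / N := by positivity
  -- step 2
  have step2 : (∑ i, if c < |b i| then (b i) ^ 2 else 0) ≤ ∑ i, |b i| ^ 3 / c := by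
    apply Finset.sum_le_sum
    intro i _
    by_cases h : c < |b i|
    · simp only [if_pos h]
      rw [le_div_iff₀ hc]
      nlinarith [sq_abs (b i), sq_nonneg (b i), h, abs_nonneg (b i)]
    · simp only [if_neg h]
      positivity
  -- moment rewrite
  have hPow : (T / N) ^ ((3:ℝ)/2) = (T / N) * Real.sqrt (T / N) := by
    rw [show ((3:ℝ)/2) = 1 + 1/2 by norm_num, Real.rpow_add hP, Real.rpow_one,
      ← Real.sqrt_eq_rpow]
  rw [hPow, div_le_iff₀ hNpos] at hM
  have hA : (∑ i, |b i| ^ 3) ≤ M * T * Real.sqrt (T / N) := by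
    have heq : M * (T / N * Real.sqrt (T / N)) * N = M * T * Real.sqrt (T / N) := by
      field_simp
    linarith [hM]
  -- combine to f ≤ M √(T/N) / c
  have step3 : (∑ i, if c < |b i| then (b i) ^ 2 else 0) / T ≤ M * Real.sqrt (T / N) / c := by
    calc (∑ i, if c < |b i| then (b i) ^ 2 else 0) / T
        ≤ (∑ i, |b i| ^ 3 / c) / T := (div_le_div_iff_of_pos_right hT).mpr step2
      _ = (∑ i, |b i| ^ 3) / (c * T) := by rw [← Finset.sum_div, div_div]
      _ ≤ (M * T * Real.sqrt (T / N)) / (c * T) :=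
          (div_le_div_iff_of_pos_right (mul_pos hc hT)).mpr hA
      _ = M * Real.sqrt (T / N) / c := by
          field_simp
  -- step 5 : M √(T/N)/c ≤ (M/ε)/√(δ N₁)
  have hsqrtδy : 0 < Real.sqrt (δ * N₁) := Real.sqrt_pos.mpr (by positivity)
  have hkey2 : Real.sqrt (T / N) * Real.sqrt (δ * N₁) ≤ (N₁:ℝ) * Real.sqrt V := by
    have h1 : (N₁:ℝ) * Real.sqrt V = Real.sqrt ((N₁:ℝ)^2 * V) := by
      rw [Real.sqrt_mul (sq_nonneg ((N₁:ℝ))) V, Real.sqrt_sq hypos.le]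
    rw [h1, ← Real.sqrt_mul hP.le]
    apply Real.sqrt_le_sqrt
    -- (T/N) * (δ * N₁) ≤ N₁^2 * V
    have hδx : δ * N < N - N₁ := by
      rw [div_lt_iff₀ hNpos] at hfrac
      nlinarith
    have hVform : (N₁:ℝ)^2 * V = ((N₁:ℝ) * ((N:ℝ) - N₁) / N) * (T / ((N:ℝ) - 1)) := by
      rw [hVdef]
      field_simp
    rw [hVform]
    have h2 : δ * ((N:ℝ) - 1) ≤ (N:ℝ) - N₁ := by nlinarith
    have e1 : T / (N:ℝ) * (δ * N₁) = (δ * ((N:ℝ) - 1)) * ((N₁:ℝ) * (T / (((N:ℝ) - 1) * N))) := by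
      field_simp
    have e2 : (N₁:ℝ) * ((N:ℝ) - N₁) / N * (T / ((N:ℝ) - 1))
        = ((N:ℝ) - N₁) * ((N₁:ℝ) * (T / (((N:ℝ) - 1) * N))) := by
      field_simp
    rw [e1, e2]
    exact mul_le_mul_of_nonneg_right h2 (by positivity)
  have step5 : M * Real.sqrt (T / N) / c ≤ (M / ε) / Real.sqrt (δ * N₁) := by
    rw [hcdef, div_div, div_le_div_iff₀ (by positivity) (by positivity)]
    calc M * Real.sqrt (T / N) * (ε * Real.sqrt (δ * N₁))
        = (M * ε) * (Real.sqrt (T / N) * Real.sqrt (δ * N₁)) := by ring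
      _ ≤ (M * ε) * ((N₁:ℝ) * Real.sqrt V) :=
          mul_le_mul_of_nonneg_left hkey2 (mul_nonneg hM0 hε.le)
      _ = M * (ε * (N₁:ℝ) * Real.sqrt V) := by ring
  exact step3.trans step5

/-- Madow's moment condition implies the Lindeberg-type condition for simple random sampling. -/
theorem madow_moment_implies_lindeberg (a : ∀ N : ℕ, Fin N → ℝ) (N₁ : ℕ → ℕ)
    (hN1 : Tendsto (fun N => N₁ N) atTop atTop)
    (hδ : ∃ δ : ℝ, 0 < δ ∧ δ < 1 ∧ ∀ᶠ N : ℕ in atTop, (N₁ N : ℝ) / (N : ℝ) < 1 - δ)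
    (hSpos : ∀ N, 2 ≤ N → 0 < fpVar (a N))
    (hmom : ∀ r : ℕ, 2 < r →
      IsBoundedUnder (· ≤ ·) atTop (fun N : ℕ =>
        ((∑ i, |a N i - fpMean (a N)| ^ r) / (N : ℝ))
          / ((∑ i, (a N i - fpMean (a N)) ^ 2) / (N : ℝ)) ^ ((r : ℝ) / 2))) :
    ∀ ε : ℝ, 0 < ε →
      Tendsto (fun N : ℕ =>
          (∑ i, if ε * (N₁ N : ℝ) * Real.sqrt (srsVar (a N) (N₁ N)) < |a N i - fpMean (a N)|
              then (a N i - fpMean (a N)) ^ 2 else 0)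
            / ∑ i, (a N i - fpMean (a N)) ^ 2)
        atTop (nhds 0) := by
  intro ε hε
  obtain ⟨δ, hδpos, hδ1, hδev⟩ := hδ
  obtain ⟨M₀, hM₀⟩ := hmom 3 (by norm_num)
  rw [Filter.eventually_map] at hM₀
  set M := max M₀ 0 with hMdef
  have hM0 : (0:ℝ) ≤ M := le_max_right _ _
  have hMev : ∀ᶠ N : ℕ in atTop,
      ((∑ i, |a N i - fpMean (a N)| ^ 3) / (N : ℝ))
        / ((∑ i, (a N i - fpMean (a N)) ^ 2) / (N : ℝ)) ^ (((3:ℕ) : ℝ) / 2) ≤ M :=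
    hM₀.mono fun N h => h.trans (le_max_left _ _)
  -- key positivity of T
  have hTpos : ∀ N : ℕ, 2 ≤ N → 0 < ∑ i, (a N i - fpMean (a N)) ^ 2 := by
    intro N h2
    have h := hSpos N h2
    unfold fpVar at h
    have hx1 : (0:ℝ) < (N:ℝ) - 1 := by
      have : (2:ℝ) ≤ N := by exact_mod_cast h2
      linarith
    rcases div_pos_iff.mp h with ⟨h1, _⟩ | ⟨_, h2'⟩
    · exact h1
    · linarith
  apply squeeze_zero' (g := fun N : ℕ => (M / ε) / Real.sqrt (δ * N₁ N))
  · filter_upwards [eventually_ge_atTop 2] with N h2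
    apply div_nonneg _ (hTpos N h2).le
    apply Finset.sum_nonneg
    intro i _
    split <;> positivity
  · filter_upwards [eventually_ge_atTop 2, hN1.eventually_ge_atTop 1, hδev, hMev]
      with N h2 h1 hfr hm
    have hT := hTpos N h2
    have hNpos : (0:ℝ) < N := by
      have : (2:ℝ) ≤ N := by exact_mod_cast h2
      linarith
    have hP : (0:ℝ) < (∑ i, (a N i - fpMean (a N)) ^ 2) / N := by positivity
    have hm' : (∑ i, |a N i - fpMean (a N)| ^ 3) / (N:ℝ)
        ≤ M * ((∑ i, (a N i - fpMean (a N)) ^ 2) / (N:ℝ)) ^ ((3:ℝ) / 2) := by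
      have hcast : (((3:ℕ) : ℝ) / 2) = ((3:ℝ) / 2) := by norm_num
      rw [hcast] at hm
      rw [← div_le_iff₀ (Real.rpow_pos_of_pos hP _)] at *
      exact hm
    have := key_ineq (fun i => a N i - fpMean (a N)) (N₁ N) ε δ M h2 h1 hε hδpos hfr hT hM0 hm'
    simpa [srsVar, fpVar] using this
  · apply Tendsto.div_atTop tendsto_const_nhds
    have hsqrt : Tendsto Real.sqrt atTop atTop := by
      rw [tendsto_atTop_atTop]
      intro b
      refine ⟨max 0 (b ^ 2), fun x hx => ?_⟩
      have hb : b ≤ Real.sqrt (b ^ 2) := by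
        rw [Real.sqrt_sq_eq_abs]; exact le_abs_self b
      exact hb.trans (Real.sqrt_le_sqrt ((le_max_right _ _).trans hx))
    apply hsqrt.comp
    apply Tendsto.const_mul_atTop hδpos
    exact tendsto_natCast_atTop_atTop.comp hN1
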